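/- arXiv:2509.18858 — 3 statements merged into one kernel-verified Lean document; each statement's English description precedes it below -/
import Mathlib

section
/- For every n ≥ 1 and any vertex w of K_{2n}, the tensor product K_{2n} × C_4 has Laplacian perfect pair state transfer at time π/2 between e_w ⊗ (e_0 − e_1) and e_w ⊗ (e_2 − e_3): there is a unit complex χ with U_{L_{K_{2n} × C_4}}(π/2)(e_w ⊗ (e_0 − e_1)) = χ e_w ⊗ (e_2 − e_3). -/
open Matrix Complex Kronecker

/-- transition matrix `U_M(t) = exp(-itM)` -/
noncomputable def U {V : Type*} [Fintype V] [DecidableEq V] (M : Matrix V V ℂ) (t : ℝ) :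
    Matrix V V ℂ :=
  NormedSpace.exp ((-(Complex.I * (t : ℂ))) • M)

/-- standard basis vector -/
noncomputable def e {V : Type*} [DecidableEq V] (v : V) : V → ℂ := Pi.single v 1

/-- Kronecker product of vectors -/
def vecKron {α β : Type*} (u : α → ℂ) (v : β → ℂ) : α × β → ℂ := fun p => u p.1 * v p.2
/-- adjacency matrix of the cycle C₄ with vertices 0,1,2,3 in cyclic order -/
def AC4 : Matrix (Fin 4) (Fin 4) ℂ := !![0,1,0,1; 1,0,1,0; 0,1,0,1; 1,0,1,0]

/-!
Write `e w = 𝟙/2n + (e w - 𝟙/2n)`, a sum of eigenvectors of `A(K₂ₙ)` for `2n - 1` and `-1`, and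
`e₀ - e₁ = p + q`, `e₂ - e₃ = p - q` with `p = ½(1,-1,1,-1)`, `q = ½(1,-1,-1,1)` eigenvectors of
`A(C₄)` for `-2` and `0`. Each of the four tensor products is an eigenvector of
`L = 2(2n-1) I - A(K₂ₙ) ⊗ A(C₄)`, with eigenvalue `≡ 0 (mod 4)` on the `p`-terms and `≡ 2 (mod 4)`
on the `q`-terms, so `U_L(π/2)` fixes the `p`-terms and negates the `q`-terms, turning
`e w ⊗ (p + q)` into `e w ⊗ (p - q)`.
-/

theorem Matrix.exp_mulVec_of_mulVec_eq_smul {V : Type*} [Fintype V] [DecidableEq V]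
    {M : Matrix V V ℂ} {z : V → ℂ} {μ : ℂ} (h : M *ᵥ z = μ • z) :
    NormedSpace.exp M *ᵥ z = Complex.exp μ • z := by
  let : NormedRing (Matrix V V ℂ) := Matrix.linftyOpNormedRing
  let : NormedAlgebra ℂ (Matrix V V ℂ) := Matrix.linftyOpNormedAlgebra
  have hpow (k : ℕ) : (M ^ k) *ᵥ z = μ ^ k • z := by
    induction k with
    | zero => simp
    | succ k ih => rw [pow_succ', ← mulVec_mulVec, ih, mulVec_smul, h, smul_smul, pow_succ]
  have hM := (NormedSpace.exp_series_hasSum_exp' (𝕂 := ℂ) M).map (mulVec.addMonoidHomLeft z)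
    (continuous_id.matrix_mulVec continuous_const)
  have hμ := (NormedSpace.exp_series_hasSum_exp' (𝕂 := ℂ) μ).smul_const z
  rw [← Complex.exp_eq_exp_ℂ] at hμ
  refine hM.unique (hμ.congr_fun fun k => ?_)
  simp [mulVec.addMonoidHomLeft, smul_mulVec, hpow, smul_smul]

theorem U_mulVec_of_mulVec_eq_smul {V : Type*} [Fintype V] [DecidableEq V]
    {M : Matrix V V ℂ} {z : V → ℂ} {μ : ℂ} (h : M *ᵥ z = μ • z) (t : ℝ) :
    U M t *ᵥ z = Complex.exp (-(I * t) * μ) • z :=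
  Matrix.exp_mulVec_of_mulVec_eq_smul (by rw [smul_mulVec, h, smul_smul])

section vecKron

variable {α β : Type*}

theorem vecKron_add_left (x x' : α → ℂ) (y : β → ℂ) :
    vecKron (x + x') y = vecKron x y + vecKron x' y :=
  funext fun _ => add_mul _ _ _

theorem vecKron_add_right (x : α → ℂ) (y y' : β → ℂ) :
    vecKron x (y + y') = vecKron x y + vecKron x y' :=
  funext fun _ => mul_add _ _ _

theorem vecKron_sub_right (x : α → ℂ) (y y' : β → ℂ) :
    vecKron x (y - y') = vecKron x y - vecKron x y' :=
  funext fun _ => mul_sub _ _ _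

theorem vecKron_smul_smul (a b : ℂ) (x : α → ℂ) (y : β → ℂ) :
    vecKron (a • x) (b • y) = (a * b) • vecKron x y :=
  funext fun _ => by simp only [vecKron, Pi.smul_apply, smul_eq_mul]; ring

theorem kronecker_mulVec_vecKron [Fintype α] [Fintype β]
    (A : Matrix α α ℂ) (B : Matrix β β ℂ) (x : α → ℂ) (y : β → ℂ) :
    (A ⊗ₖ B) *ᵥ vecKron x y = vecKron (A *ᵥ x) (B *ᵥ y) := by
  ext ⟨i, j⟩
  simp only [vecKron, mulVec, dotProduct, kroneckerMap_apply, Fintype.sum_prod_type,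
    Finset.sum_mul_sum]
  exact Finset.sum_congr rfl fun _ _ => Finset.sum_congr rfl fun _ _ => by ring

theorem smul_one_sub_kronecker_mulVec_vecKron [Fintype α] [DecidableEq α] [Fintype β]
    [DecidableEq β] {A : Matrix α α ℂ} {B : Matrix β β ℂ} {x : α → ℂ} {y : β → ℂ} {a b : ℂ}
    (hx : A *ᵥ x = a • x) (hy : B *ᵥ y = b • y) (c : ℂ) :
    (c • 1 - A ⊗ₖ B) *ᵥ vecKron x y = (c - a * b) • vecKron x y := by
  rw [sub_mulVec, smul_mulVec, one_mulVec, kronecker_mulVec_vecKron, hx, hy, vecKron_smul_smul,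
    sub_smul]

end vecKron

theorem SimpleGraph.adjMatrix_top_mulVec {V : Type*} [Fintype V] [DecidableEq V] (x : V → ℂ) :
    (⊤ : SimpleGraph V).adjMatrix ℂ *ᵥ x = (∑ j, x j) • 1 - x := by
  ext i
  simp [mulVec, dotProduct, ite_mul, Finset.sum_ite, Finset.filter_ne,
    Finset.sum_erase_eq_sub]

theorem SimpleGraph.adjMatrix_top_mulVec_const {V : Type*} [Fintype V] [DecidableEq V] (a : ℂ) :
    (⊤ : SimpleGraph V).adjMatrix ℂ *ᵥ (fun _ => a) = (Fintype.card V - 1 : ℂ) • fun _ => a := by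
  rw [adjMatrix_top_mulVec]
  ext i
  simp [sub_mul]

theorem SimpleGraph.adjMatrix_top_mulVec_of_sum_eq_zero {V : Type*} [Fintype V] [DecidableEq V]
    {x : V → ℂ} (hx : ∑ j, x j = 0) : (⊤ : SimpleGraph V).adjMatrix ℂ *ᵥ x = (-1 : ℂ) • x := by
  rw [adjMatrix_top_mulVec, hx, zero_smul, zero_sub, neg_one_smul]

theorem sum_e_sub_const_inv_card_eq_zero {V : Type*} [Fintype V] [DecidableEq V] (v : V) :
    ∑ j, (e v - fun _ : V => (Fintype.card V : ℂ)⁻¹) j = 0 := by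
  have : Nonempty V := ⟨v⟩
  simp [e, Finset.sum_sub_distrib]

theorem AC4_mulVec_alternating (a : ℂ) : AC4 *ᵥ ![a, -a, a, -a] = (-2 : ℂ) • ![a, -a, a, -a] := by
  ext j
  fin_cases j <;> simp [AC4, mulVec, dotProduct, Fin.sum_univ_four] <;> ring

theorem AC4_mulVec_antipodal (a : ℂ) : AC4 *ᵥ ![a, -a, -a, a] = (0 : ℂ) • ![a, -a, -a, a] := by
  ext j
  fin_cases j <;> simp [AC4, mulVec, dotProduct, Fin.sum_univ_four]

theorem e_zero_sub_e_one_fin_four :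
    e (0 : Fin 4) - e 1 = ![2⁻¹, -2⁻¹, 2⁻¹, -2⁻¹] + ![2⁻¹, -2⁻¹, -2⁻¹, 2⁻¹] := by
  ext j
  fin_cases j <;> simp [e] <;> norm_num

theorem e_two_sub_e_three_fin_four :
    e (2 : Fin 4) - e 3 = ![2⁻¹, -2⁻¹, 2⁻¹, -2⁻¹] - ![2⁻¹, -2⁻¹, -2⁻¹, 2⁻¹] := by
  ext j
  fin_cases j <;> simp [e] <;> norm_num

theorem U_pi_div_two_mulVec_eq_self {V : Type*} [Fintype V] [DecidableEq V]
    {M : Matrix V V ℂ} {z : V → ℂ} {μ : ℂ} (h : M *ᵥ z = μ • z) (k : ℤ) (hμ : μ = 4 * k) :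
    U M (Real.pi / 2) *ᵥ z = z := by
  rw [U_mulVec_of_mulVec_eq_smul h, hμ,
    show -(I * ((Real.pi / 2 : ℝ) : ℂ)) * (4 * k) = (-k : ℤ) * (2 * Real.pi * I) by push_cast; ring,
    exp_int_mul_two_pi_mul_I, one_smul]

theorem U_pi_div_two_mulVec_eq_neg {V : Type*} [Fintype V]
    [DecidableEq V] {M : Matrix V V ℂ} {z : V → ℂ} {μ : ℂ} (h : M *ᵥ z = μ • z) (k : ℤ)
    (hμ : μ = 4 * k + 2) : U M (Real.pi / 2) *ᵥ z = -z := by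
  rw [U_mulVec_of_mulVec_eq_smul h, hμ,
    show -(I * ((Real.pi / 2 : ℝ) : ℂ)) * (4 * k + 2) =
        (-k - 1 : ℤ) * (2 * Real.pi * I) + Real.pi * I by push_cast; ring,
    exp_add, exp_int_mul_two_pi_mul_I, exp_pi_mul_I, one_mul, neg_one_smul]

theorem stmt12_general (n : ℕ) (w : Fin (2 * n)) :
    ∃ χ : ℂ, ‖χ‖ = 1 ∧
      (U ((((2 * n - 1) * 2 : ℕ) : ℂ) •
              (1 : Matrix (Fin (2 * n) × Fin 4) (Fin (2 * n) × Fin 4) ℂ)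
            - ((⊤ : SimpleGraph (Fin (2 * n))).adjMatrix ℂ) ⊗ₖ AC4) (Real.pi / 2)) *ᵥ
          vecKron (e w) (e (0 : Fin 4) - e (1 : Fin 4))
        = χ • vecKron (e w) (e (2 : Fin 4) - e (3 : Fin 4)) := by
  set c : ℂ := (((2 * n - 1) * 2 : ℕ) : ℂ) with hc_def
  have hc : c = 4 * ((n : ℤ) - 1 : ℤ) + 2 := by
    rw [hc_def, Nat.cast_mul, Nat.cast_sub w.pos]; push_cast; ring
  have ha := SimpleGraph.adjMatrix_top_mulVec_const (V := Fin (2 * n))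
    (Fintype.card (Fin (2 * n)) : ℂ)⁻¹
  have ha' := SimpleGraph.adjMatrix_top_mulVec_of_sum_eq_zero (sum_e_sub_const_inv_card_eq_zero w)
  set a : Fin (2 * n) → ℂ := fun _ => (Fintype.card (Fin (2 * n)) : ℂ)⁻¹
  have hb := AC4_mulVec_alternating 2⁻¹
  have hb' := AC4_mulVec_antipodal 2⁻¹
  have hap := U_pi_div_two_mulVec_eq_self (smul_one_sub_kronecker_mulVec_vecKron ha hb c)
    (2 * n - 1) (by rw [hc, Fintype.card_fin]; push_cast; ring)
  have haq := U_pi_div_two_mulVec_eq_neg (smul_one_sub_kronecker_mulVec_vecKron ha hb' c)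
    (n - 1) (by rw [hc]; ring)
  have ha'p := U_pi_div_two_mulVec_eq_self (smul_one_sub_kronecker_mulVec_vecKron ha' hb c)
    (n - 1) (by rw [hc]; ring)
  have ha'q := U_pi_div_two_mulVec_eq_neg (smul_one_sub_kronecker_mulVec_vecKron ha' hb' c)
    (n - 1) (by rw [hc]; ring)
  refine ⟨1, norm_one, ?_⟩
  rw [show e w = a + (e w - a) by abel, e_zero_sub_e_one_fin_four, e_two_sub_e_three_fin_four]
  simp only [vecKron_add_left, vecKron_add_right, vecKron_sub_right, mulVec_add, one_smul,
    hap, haq, ha'p, ha'q]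
  abel

theorem stmt12 (n : ℕ) (hn : 1 ≤ n) (w : Fin (2 * n)) :
    ∃ χ : ℂ, ‖χ‖ = 1 ∧
      (U ((((2 * n - 1) * 2 : ℕ) : ℂ) •
              (1 : Matrix (Fin (2 * n) × Fin 4) (Fin (2 * n) × Fin 4) ℂ)
            - ((⊤ : SimpleGraph (Fin (2 * n))).adjMatrix ℂ) ⊗ₖ AC4) (Real.pi / 2)) *ᵥ
          vecKron (e w) (e (0 : Fin 4) - e (1 : Fin 4))
        = χ • vecKron (e w) (e (2 : Fin 4) - e (3 : Fin 4)) :=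
  stmt12_general n w
end

section
/- For every n ≥ 1 and any two distinct vertices a, b of K_{4n}, the tensor product K_{4n} × P_2 has Laplacian perfect pair state transfer between e_a ⊗ e_0 − e_b ⊗ e_1 and e_b ⊗ e_0 − e_a ⊗ e_1 at time π/2: |½(e_a ⊗ e_0 − e_b ⊗ e_1)^⊤ U_{L_{K_{4n} × P_2}}(π/2)(e_b ⊗ e_0 − e_a ⊗ e_1)|² = 1. -/
open Matrix Complex Kronecker

/-- adjacency matrix of the path P₂ on vertices {0, 1} -/
def AP2 : Matrix (Fin 2) (Fin 2) ℂ := !![0, 1; 1, 0]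

/-! With `J` the all-ones matrix and `A = A_{P₂}`, `-(iπ/2) L` splits into the commuting pieces
`-(iπ/2)(4n-1) • 1 + 2πin • T - (iπ/2) • S`, where `T = (J / 4n) ⊗ A` and `S = 1 ⊗ A` both satisfy
`M ^ 3 = M`, so that `exp (c • M) = 1 + sinh c • M + (cosh c - 1) • M ^ 2`. At `c = 2πin` this is
`1`, at `c = -iπ/2` it is `-i • S`, and the scalar factor is `i`. Hence `U_L(π/2) = 1 ⊗ A`, which
maps `e_b ⊗ e_0 - e_a ⊗ e_1` to `-(e_a ⊗ e_0 - e_b ⊗ e_1)`. -/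

open scoped Nat

theorem exp_smul_of_isIdempotentElem {A : Type*} [Ring A] [Algebra ℂ A] [TopologicalSpace A]
    [IsTopologicalRing A] [ContinuousSMul ℂ A] [T2Space A] {P : A} (hP : IsIdempotentElem P)
    (c : ℂ) : NormedSpace.exp (c • P) = 1 + (Complex.exp c - 1) • P := by
  have hterm : ∀ k : ℕ, (k ! : ℂ)⁻¹ • (c • P) ^ k =
      ((k ! : ℂ)⁻¹ * c ^ k) • P + if k = 0 then 1 - P else 0 := by
    rintro (_ | k)
    · simp
    · rw [smul_pow, hP.pow_succ_eq, smul_smul, if_neg k.succ_ne_zero, add_zero]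
  have hseries : HasSum (fun k : ℕ => (k ! : ℂ)⁻¹ • (c • P) ^ k)
      (Complex.exp c • P + (1 - P)) := by
    simp only [hterm]
    refine (HasSum.smul_const ?_ P).add (hasSum_ite_eq 0 (1 - P))
    simpa [Complex.exp_eq_exp_ℂ] using NormedSpace.exp_series_hasSum_exp' (𝕂 := ℂ) c
  rw [congrFun (NormedSpace.exp_eq_tsum ℂ) _, hseries.tsum_eq]
  module

section PowThreeEqSelf

variable {m : Type*} [Fintype m] [DecidableEq m]

theorem Matrix.exp_smul_of_pow_three_eq_self {M : Matrix m m ℂ} (hM : M ^ 3 = M) (c : ℂ) :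
    NormedSpace.exp (c • M) = 1 + Complex.sinh c • M + (Complex.cosh c - 1) • M ^ 2 := by
  have h11 : M * M = M ^ 2 := (sq M).symm
  have h12 : M * M ^ 2 = M := by rw [← pow_succ', hM]
  have h21 : M ^ 2 * M = M := by rw [← pow_succ, hM]
  have h22 : M ^ 2 * M ^ 2 = M ^ 2 := by rw [← pow_add, pow_succ, hM, sq]
  -- `M = P - Q` with `P`, `Q` the orthogonal spectral projections for the eigenvalues `±1`
  set P := (2⁻¹ : ℂ) • (M ^ 2 + M)
  set Q := (2⁻¹ : ℂ) • (M ^ 2 - M)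
  have hP : IsIdempotentElem P := by
    simp only [IsIdempotentElem, P, smul_mul_smul_comm, add_mul, mul_add, h11, h12, h21, h22]
    module
  have hQ : IsIdempotentElem Q := by
    simp only [IsIdempotentElem, Q, smul_mul_smul_comm, sub_mul, mul_sub, h11, h12, h21, h22]
    module
  have hPQ : P * Q = 0 := by
    simp only [P, Q, smul_mul_smul_comm, add_mul, mul_sub, h11, h12, h21, h22]
    module
  have hQP : Q * P = 0 := by
    simp only [P, Q, smul_mul_smul_comm, sub_mul, mul_add, h11, h12, h21, h22]
    module
  have hcomm : Commute (c • P) ((-c) • Q) := by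
    simp only [Commute, SemiconjBy, smul_mul_smul_comm, hPQ, hQP, smul_zero]
  have hsplit : c • M = c • P + (-c) • Q := by
    simp only [P, Q, smul_smul]
    module
  rw [hsplit, Matrix.exp_add_of_commute _ _ hcomm, exp_smul_of_isIdempotentElem hP,
    exp_smul_of_isIdempotentElem hQ]
  simp only [add_mul, mul_add, smul_mul_smul_comm, hPQ, one_mul, mul_one, smul_zero, add_zero]
  simp only [P, Q, smul_smul]
  rw [Complex.sinh, Complex.cosh]
  match_scalars <;> ring

theorem Matrix.exp_smul_eq_one_of_pow_three_eq_self {M : Matrix m m ℂ} (hM : M ^ 3 = M) {c : ℂ}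
    (hc : Complex.exp c = 1) : NormedSpace.exp (c • M) = 1 := by
  have hc' : Complex.exp (-c) = 1 := by rw [Complex.exp_neg, hc, inv_one]
  rw [exp_smul_of_pow_three_eq_self hM, Complex.sinh, Complex.cosh, hc, hc']
  norm_num

theorem Matrix.exp_smul_of_mul_self_eq_one {S : Matrix m m ℂ} (hS : S * S = 1) (c : ℂ) :
    NormedSpace.exp (c • S) = Complex.cosh c • 1 + Complex.sinh c • S := by
  have hS3 : S ^ 3 = S := by rw [pow_succ', sq, hS, mul_one]
  rw [exp_smul_of_pow_three_eq_self hS3, sq, hS]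
  module

end PowThreeEqSelf

theorem kronecker_mulVec_vecKron_s14 {l m n p : Type*} [Fintype m] [Fintype p] (A : Matrix l m ℂ)
    (B : Matrix n p ℂ) (u : m → ℂ) (v : p → ℂ) :
    (A ⊗ₖ B) *ᵥ vecKron u v = vecKron (A *ᵥ u) (B *ᵥ v) := by
  ext ⟨i, k⟩
  simp only [mulVec, dotProduct, vecKron, kronecker_apply, Fintype.sum_prod_type,
    Finset.sum_mul_sum]
  exact Finset.sum_congr rfl fun _ _ => Finset.sum_congr rfl fun _ _ => by ring

theorem vecKron_dotProduct_vecKron {m p : Type*} [Fintype m] [Fintype p] (u x : m → ℂ)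
    (v y : p → ℂ) : vecKron u v ⬝ᵥ vecKron x y = (u ⬝ᵥ x) * (v ⬝ᵥ y) := by
  simp only [dotProduct, vecKron, Fintype.sum_prod_type, Finset.sum_mul_sum]
  exact Finset.sum_congr rfl fun _ _ => Finset.sum_congr rfl fun _ _ => by ring

theorem AP2_mul_self : AP2 * AP2 = 1 := by
  ext i j
  fin_cases i <;> fin_cases j <;> simp [AP2, Matrix.mul_apply, Fin.sum_univ_two, one_apply]

theorem AP2_mulVec_e_zero : AP2 *ᵥ e 0 = e 1 := by
  ext i
  fin_cases i <;> simp [AP2, e]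

theorem AP2_mulVec_e_one : AP2 *ᵥ e 1 = e 0 := by
  ext i
  fin_cases i <;> simp [AP2, e]

theorem isIdempotentElem_inv_card_smul_of_one {V : Type*} [Fintype V] [Nonempty V] :
    IsIdempotentElem ((Fintype.card V : ℂ)⁻¹ • of 1 : Matrix V V ℂ) := by
  have hN : (Fintype.card V : ℂ) ≠ 0 := by simp
  ext i j
  simp [Matrix.mul_apply, hN]

theorem kronecker_pow_three_eq_self {V W : Type*} [Fintype V] [DecidableEq V] [Fintype W]
    [DecidableEq W] {Q : Matrix V V ℂ} {R : Matrix W W ℂ} (hQ : IsIdempotentElem Q) (hR : R * R = 1) :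
    (Q ⊗ₖ R) ^ 3 = Q ⊗ₖ R := by
  rw [pow_succ, sq, ← mul_kronecker_mul, ← mul_kronecker_mul, hQ.eq, hQ.eq, hR, one_mul]

theorem adjMatrix_top_kronecker {V W : Type*} [Fintype V] [DecidableEq V] [Nonempty V]
    (R : Matrix W W ℂ) :
    (⊤ : SimpleGraph V).adjMatrix ℂ ⊗ₖ R =
      (Fintype.card V : ℂ) • (((Fintype.card V : ℂ)⁻¹ • of 1 : Matrix V V ℂ) ⊗ₖ R) - 1 ⊗ₖ R := by
  have hN : (Fintype.card V : ℂ) ≠ 0 := by simp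
  ext ⟨i, k⟩ ⟨j, l⟩
  by_cases h : i = j <;> simp [h, one_apply, hN]

theorem U_pi_div_two_completeGraph_kronecker_AP2 {V : Type*} [Fintype V] [DecidableEq V]
    [Nonempty V] {n : ℕ} (hV : Fintype.card V = 4 * n) :
    U (((4 * n - 1 : ℕ) : ℂ) • 1 - (⊤ : SimpleGraph V).adjMatrix ℂ ⊗ₖ AP2) (Real.pi / 2) =
      1 ⊗ₖ AP2 := by
  have hadj := adjMatrix_top_kronecker (V := V) AP2
  set T := ((Fintype.card V : ℂ)⁻¹ • of 1 : Matrix V V ℂ) ⊗ₖ AP2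
  set S := (1 : Matrix V V ℂ) ⊗ₖ AP2
  have hT : T ^ 3 = T :=
    kronecker_pow_three_eq_self isIdempotentElem_inv_card_smul_of_one AP2_mul_self
  have hS : S * S = 1 := by rw [← mul_kronecker_mul, one_mul, AP2_mul_self, one_kronecker_one]
  have hTS : Commute T S := by
    rw [Commute, SemiconjBy, ← mul_kronecker_mul, ← mul_kronecker_mul, one_mul, mul_one]
  have hexponent : (-(I * ((Real.pi / 2 : ℝ) : ℂ))) •
      (((4 * n - 1 : ℕ) : ℂ) • 1 - (⊤ : SimpleGraph V).adjMatrix ℂ ⊗ₖ AP2) =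
      (-(I * (Real.pi / 2)) * (4 * n - 1)) • 1 +
        ((n * (2 * Real.pi * I)) • T + (-(Real.pi / 2) * I) • S) := by
    rw [hadj, hV, Nat.cast_sub (by have := Fintype.card_pos (α := V); omega)]
    push_cast
    module
  have hscalar : Complex.exp (-(I * (Real.pi / 2)) * (4 * n - 1)) = I := by
    have h : -(I * (Real.pi / 2)) * (4 * n - 1) =
        Real.pi / 2 * I + (-n : ℤ) * (2 * Real.pi * I) := by
      push_cast
      ring
    rw [h, Complex.exp_add, Complex.exp_int_mul_two_pi_mul_I, mul_one, Complex.exp_mul_I,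
      Complex.cos_pi_div_two, Complex.sin_pi_div_two]
    ring
  rw [U, hexponent, Matrix.exp_add_of_commute _ _ ((Commute.one_left _).smul_left _),
    Matrix.exp_add_of_commute _ _ ((hTS.smul_left _).smul_right _),
    exp_smul_of_isIdempotentElem IsIdempotentElem.one, hscalar,
    exp_smul_eq_one_of_pow_three_eq_self hT (Complex.exp_nat_mul_two_pi_mul_I n),
    exp_smul_of_mul_self_eq_one hS, Complex.cosh_mul_I, Complex.sinh_mul_I, Complex.cos_neg,
    Complex.sin_neg, Complex.cos_pi_div_two, Complex.sin_pi_div_two]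
  simp only [zero_smul, zero_add, add_mul, one_mul, smul_mul_assoc, smul_smul]
  match_scalars
  linear_combination -I_sq

theorem stmt14_general (n : ℕ) (a b : Fin (4 * n)) :
    ‖(1 / 2 : ℂ) *
        ((vecKron (e a) (e (0 : Fin 2)) - vecKron (e b) (e (1 : Fin 2))) ⬝ᵥ
          ((U (((4 * n - 1 : ℕ) : ℂ) •
                  (1 : Matrix (Fin (4 * n) × Fin 2) (Fin (4 * n) × Fin 2) ℂ)
                - ((⊤ : SimpleGraph (Fin (4 * n))).adjMatrix ℂ) ⊗ₖ AP2) (Real.pi / 2)) *ᵥ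
            (vecKron (e b) (e (0 : Fin 2)) - vecKron (e a) (e (1 : Fin 2)))))‖ ^ 2 = 1 := by
  have : Nonempty (Fin (4 * n)) := ⟨a⟩
  set x := vecKron (e a) (e (0 : Fin 2)) - vecKron (e b) (e (1 : Fin 2))
  have hswap : (1 ⊗ₖ AP2) *ᵥ (vecKron (e b) (e (0 : Fin 2)) - vecKron (e a) (e 1)) = -x := by
    rw [mulVec_sub, kronecker_mulVec_vecKron_s14, kronecker_mulVec_vecKron_s14, one_mulVec, one_mulVec,
      AP2_mulVec_e_zero, AP2_mulVec_e_one, neg_sub]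
  have hx : x ⬝ᵥ x = 2 := by
    simp only [x, sub_dotProduct, dotProduct_sub, vecKron_dotProduct_vecKron]
    norm_num [e]
  rw [U_pi_div_two_completeGraph_kronecker_AP2 (Fintype.card_fin _), hswap, dotProduct_neg, hx]
  norm_num

theorem stmt14 (n : ℕ) (hn : 1 ≤ n) (a b : Fin (4 * n)) (hab : a ≠ b) :
    ‖(1 / 2 : ℂ) *
        ((vecKron (e a) (e (0 : Fin 2)) - vecKron (e b) (e (1 : Fin 2))) ⬝ᵥ
          ((U (((4 * n - 1 : ℕ) : ℂ) •
                  (1 : Matrix (Fin (4 * n) × Fin 2) (Fin (4 * n) × Fin 2) ℂ)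
                - ((⊤ : SimpleGraph (Fin (4 * n))).adjMatrix ℂ) ⊗ₖ AP2) (Real.pi / 2)) *ᵥ
            (vecKron (e b) (e (0 : Fin 2)) - vecKron (e a) (e (1 : Fin 2)))))‖ ^ 2 = 1 :=
  stmt14_general n a b
end

section
/- Let G be r₁-regular and H be r₂-regular on the same n-vertex set. The double cover G ⋉ H has Laplacian perfect pair state transfer between e_i ⊗ (e_a − e_b) and e_i ⊗ (e_c − e_d) (for i = 0 or 1) at time τ if and only if there exists a unit complex number χ such that (e_a − e_b)^⊤ U_{A_G+A_H}(τ)(e_c − e_d) = 2χ and (e_a − e_b)^⊤ U_{A_G−A_H}(τ)(e_c − e_d) = 2χ, i.e., both A_G+A_H and A_G−A_H have perfect pair state transfer between e_a − e_b and e_c − e_d with the same phase χ. -/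
open Matrix Complex Kronecker

/-!
The Laplacian of the double cover is `(r₁ + r₂) • 1 - A` with `A = fromBlocks A_G A_H A_H A_G`.
The scalar part only contributes a unimodular phase, and `A` is conjugate under
`T = !![1, 1; 1, -1]` to `fromBlocks (A_G + A_H) 0 0 (A_G - A_H)`. Hence, on either layer, the
modulus of the normalised pair-state amplitude is `‖p + q‖ / 4`, where `p` and `q` are the
pair-state amplitudes of `A_G + A_H` and `A_G - A_H`. Since the transition matrices are unitary,
Cauchy–Schwarz gives `‖p‖, ‖q‖ ≤ 2`, so amplitude `1` forces equality in the triangle inequality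
of the strictly convex space `ℂ`: `p = q` with `‖p‖ = 2`.
-/

open NormedSpace

section Vectors

variable {m n : Type*} [Fintype m] [Fintype n]

theorem sumElim_zero_dotProduct_fromBlocks_mulVec (P : Matrix m m ℂ) (Q : Matrix m n ℂ)
    (R : Matrix n m ℂ) (S : Matrix n n ℂ) (w v : m → ℂ) :
    Sum.elim w 0 ⬝ᵥ (fromBlocks P Q R S *ᵥ Sum.elim v 0) = w ⬝ᵥ (P *ᵥ v) := by
  simp [fromBlocks_mulVec, sumElim_dotProduct_sumElim]

theorem zero_sumElim_dotProduct_fromBlocks_mulVec (P : Matrix m m ℂ) (Q : Matrix m n ℂ)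
    (R : Matrix n m ℂ) (S : Matrix n n ℂ) (w v : n → ℂ) :
    Sum.elim 0 w ⬝ᵥ (fromBlocks P Q R S *ᵥ Sum.elim 0 v) = w ⬝ᵥ (S *ᵥ v) := by
  simp [fromBlocks_mulVec, sumElim_dotProduct_sumElim]

theorem star_dotProduct_mulVec (M : Matrix m n ℂ) (x : m → ℂ) (y : n → ℂ) :
    star (x ⬝ᵥ (M *ᵥ y)) = star y ⬝ᵥ (Mᴴ *ᵥ star x) := by
  rw [← star_dotProduct_star, star_mulVec, dotProduct_mulVec]

theorem norm_dotProduct_conjTranspose_add_mulVec (X Y : Matrix m n ℂ) {v : m → ℂ} {w : n → ℂ}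
    (hv : star v = v) (hw : star w = w) :
    ‖w ⬝ᵥ ((Xᴴ + Yᴴ) *ᵥ v)‖ = ‖v ⬝ᵥ (X *ᵥ w) + v ⬝ᵥ (Y *ᵥ w)‖ := by
  rw [add_mulVec, dotProduct_add, ← norm_star, star_add, star_dotProduct_mulVec,
    star_dotProduct_mulVec, hv, hw, conjTranspose_conjTranspose, conjTranspose_conjTranspose]

variable [DecidableEq n]

theorem norm_toLp_mulVec_of_mem_unitaryGroup {M : Matrix n n ℂ} (hM : M ∈ unitaryGroup n ℂ)
    (y : n → ℂ) : ‖WithLp.toLp 2 (M *ᵥ y)‖ = ‖WithLp.toLp 2 y‖ := by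
  have h : inner ℂ (WithLp.toLp 2 (M *ᵥ y)) (WithLp.toLp 2 (M *ᵥ y))
      = inner ℂ (WithLp.toLp 2 y) (WithLp.toLp 2 y) := by
    rw [EuclideanSpace.inner_toLp_toLp, EuclideanSpace.inner_toLp_toLp, star_mulVec,
      dotProduct_comm, dotProduct_mulVec, vecMul_vecMul, ← star_eq_conjTranspose,
      mem_unitaryGroup_iff'.mp hM, vecMul_one, dotProduct_comm]
  rw [inner_self_eq_norm_sq_to_K, inner_self_eq_norm_sq_to_K] at h
  exact (pow_left_inj₀ (norm_nonneg _) (norm_nonneg _) two_ne_zero).mp (by exact_mod_cast h)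

theorem norm_star_dotProduct_mulVec_le {M : Matrix n n ℂ} (hM : M ∈ unitaryGroup n ℂ)
    (x y : n → ℂ) :
    ‖star x ⬝ᵥ (M *ᵥ y)‖ ≤ ‖WithLp.toLp 2 x‖ * ‖WithLp.toLp 2 y‖ := by
  rw [← norm_toLp_mulVec_of_mem_unitaryGroup hM y, dotProduct_comm,
    ← EuclideanSpace.inner_toLp_toLp]
  exact norm_inner_le_norm (𝕜 := ℂ) _ _

end Vectors

theorem star_e_sub_e {n : Type*} [DecidableEq n] (a b : n) : star (e a - e b) = e a - e b := by
  simp [e, star_sub, Pi.star_single]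

theorem norm_toLp_e_sub_e {n : Type*} [Fintype n] [DecidableEq n] {a b : n} (hab : a ≠ b) :
    ‖WithLp.toLp 2 (e a - e b)‖ = √2 := by
  have hsingle (i : n) : WithLp.toLp 2 (e i) = EuclideanSpace.single i (1 : ℂ) := rfl
  rw [WithLp.toLp_sub, hsingle, hsingle, ← sq_eq_sq₀ (norm_nonneg _) (Real.sqrt_nonneg _),
    norm_sub_sq (𝕜 := ℂ), EuclideanSpace.inner_single_left]
  simp [hab.symm]
  norm_num

namespace Matrix

variable {n : Type*} [Fintype n] [DecidableEq n]

/-- `(X, Y) ↦ T * fromBlocks X 0 0 Y * T⁻¹` with `T = !![1, 1; 1, -1]`. -/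
@[simps]
noncomputable def blockCirculantAlgHom :
    Matrix n n ℂ × Matrix n n ℂ →ₐ[ℂ] Matrix (n ⊕ n) (n ⊕ n) ℂ where
  toFun p := (2⁻¹ : ℂ) • fromBlocks (p.1 + p.2) (p.1 - p.2) (p.1 - p.2) (p.1 + p.2)
  map_one' := by
    rw [← fromBlocks_one, fromBlocks_smul]
    congr 1 <;> simp <;> module
  map_mul' p q := by
    simp only [Prod.fst_mul, Prod.snd_mul, smul_mul_smul_comm, fromBlocks_multiply,
      fromBlocks_smul]
    congr 1 <;> (simp only [add_mul, mul_add, sub_mul, mul_sub]; module)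
  map_zero' := by simp
  map_add' p q := by
    simp only [Prod.fst_add, Prod.snd_add, ← smul_add, fromBlocks_add]
    congr 1
    abel_nf
  commutes' c := by
    simp only [Algebra.algebraMap_eq_smul_one, Prod.smul_fst, Prod.smul_snd, Prod.fst_one,
      Prod.snd_one, ← fromBlocks_one, fromBlocks_smul]
    congr 1 <;> simp <;> module

theorem blockCirculantAlgHom_apply_add_sub (A B : Matrix n n ℂ) :
    blockCirculantAlgHom (A + B, A - B) = fromBlocks A B B A := by
  rw [blockCirculantAlgHom_apply, fromBlocks_smul]
  congr 1 <;> module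

theorem exp_blockCirculantAlgHom (p : Matrix n n ℂ × Matrix n n ℂ) :
    exp (blockCirculantAlgHom p) = blockCirculantAlgHom (exp p.1, exp p.2) := by
  -- `exp` does not depend on the norm; any algebra norm gives access to `map_exp`.
  let : NormedRing (Matrix n n ℂ) := Matrix.linftyOpNormedRing
  let : NormedAlgebra ℂ (Matrix n n ℂ) := Matrix.linftyOpNormedAlgebra
  let : NormedAlgebra ℚ (Matrix n n ℂ) := Matrix.linftyOpNormedAlgebra
  let : NormedRing (Matrix (n ⊕ n) (n ⊕ n) ℂ) := Matrix.linftyOpNormedRing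
  let : NormedAlgebra ℚ (Matrix (n ⊕ n) (n ⊕ n) ℂ) := Matrix.linftyOpNormedAlgebra
  have hp : exp p = (exp p.1, exp p.2) := Prod.ext (Prod.fst_exp p) (Prod.snd_exp p)
  rw [← hp]
  exact (map_exp (blockCirculantAlgHom (n := n))
    (LinearMap.continuous_of_finiteDimensional blockCirculantAlgHom.toLinearMap) p).symm

end Matrix

section Transition

variable {n : Type*} [Fintype n] [DecidableEq n]

theorem U_zero (M : Matrix n n ℂ) : U M 0 = 1 := by
  simp [U]

theorem U_add (M : Matrix n n ℂ) (s t : ℝ) : U M (s + t) = U M s * U M t := by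
  rw [U, U, U, ← Matrix.exp_add_of_commute _ _ (((Commute.refl M).smul_left _).smul_right _)]
  congr 1
  push_cast
  module

theorem conjTranspose_U {N : Matrix n n ℂ} (hN : N.IsHermitian) (t : ℝ) :
    (U N t)ᴴ = U N (-t) := by
  rw [U, ← Matrix.exp_conjTranspose, conjTranspose_smul, hN.eq, U]
  congr 1
  simp

theorem U_mem_unitaryGroup {N : Matrix n n ℂ} (hN : N.IsHermitian) (t : ℝ) :
    U N t ∈ unitaryGroup n ℂ := by
  rw [mem_unitaryGroup_iff', star_eq_conjTranspose, conjTranspose_U hN, ← U_add,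
    neg_add_cancel, U_zero]

theorem exp_smul_one (c : ℂ) : exp (c • (1 : Matrix n n ℂ)) = Complex.exp c • 1 := by
  rw [smul_one_eq_diagonal, smul_one_eq_diagonal, exp_diagonal, Pi.exp_def, Complex.exp_eq_exp_ℂ]

theorem U_smul_one_sub (M : Matrix n n ℂ) (s t : ℝ) :
    U ((s : ℂ) • 1 - M) t = Complex.exp (-(I * t * s)) • U M (-t) := by
  have hsplit : -(I * t) • ((s : ℂ) • (1 : Matrix n n ℂ) - M)
      = (-(I * t * s)) • 1 + (-(I * ((-t : ℝ) : ℂ))) • M := by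
    push_cast
    module
  rw [U, hsplit, Matrix.exp_add_of_commute _ _ ((Commute.one_left _).smul_left _ |>.smul_right _),
    exp_smul_one, smul_one_mul, U]

theorem norm_exp_neg_I_mul_mul (s t : ℝ) : ‖Complex.exp (-(I * t * s))‖ = 1 := by
  rw [show -(I * t * s) = ((-(t * s) : ℝ) : ℂ) * I by push_cast; ring,
    Complex.norm_exp_ofReal_mul_I]

theorem U_fromBlocks (A B : Matrix n n ℂ) (t : ℝ) :
    U (fromBlocks A B B A) t = blockCirculantAlgHom (U (A + B) t, U (A - B) t) := by
  rw [U, ← blockCirculantAlgHom_apply_add_sub, ← map_smul, exp_blockCirculantAlgHom]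
  simp only [Prod.smul_mk, U, smul_add, smul_sub]

theorem U_smul_one_sub_fromBlocks {A B : Matrix n n ℂ} (hA : A.IsHermitian)
    (hB : B.IsHermitian) (s t : ℝ) :
    U ((s : ℂ) • 1 - fromBlocks A B B A) t
      = Complex.exp (-(I * t * s)) • blockCirculantAlgHom ((U (A + B) t)ᴴ, (U (A - B) t)ᴴ) := by
  rw [U_smul_one_sub, U_fromBlocks, conjTranspose_U (hA.add hB), conjTranspose_U (hA.sub hB)]

theorem norm_e_sub_e_dotProduct_U_mulVec_le {N : Matrix n n ℂ} (hN : N.IsHermitian) (t : ℝ)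
    {a b c d : n} (hab : a ≠ b) (hcd : c ≠ d) :
    ‖(e a - e b) ⬝ᵥ (U N t *ᵥ (e c - e d))‖ ≤ 2 := by
  have h := norm_star_dotProduct_mulVec_le (U_mem_unitaryGroup hN t) (e a - e b) (e c - e d)
  rwa [star_e_sub_e, norm_toLp_e_sub_e hab, norm_toLp_e_sub_e hcd,
    Real.mul_self_sqrt zero_le_two] at h

theorem norm_half_sumElim_zero_dotProduct_U_mulVec {A B : Matrix n n ℂ} (hA : A.IsHermitian)
    (hB : B.IsHermitian) (s t : ℝ) {v w : n → ℂ} (hv : star v = v) (hw : star w = w) :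
    ‖(1 / 2 : ℂ) * (Sum.elim w 0 ⬝ᵥ (U ((s : ℂ) • 1 - fromBlocks A B B A) t *ᵥ Sum.elim v 0))‖
      = ‖v ⬝ᵥ (U (A + B) t *ᵥ w) + v ⬝ᵥ (U (A - B) t *ᵥ w)‖ / 4 := by
  rw [U_smul_one_sub_fromBlocks hA hB, smul_mulVec, dotProduct_smul, blockCirculantAlgHom_apply,
    smul_mulVec, dotProduct_smul, sumElim_zero_dotProduct_fromBlocks_mulVec, smul_eq_mul,
    smul_eq_mul, norm_mul, norm_mul, norm_mul, norm_exp_neg_I_mul_mul,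
    norm_dotProduct_conjTranspose_add_mulVec _ _ hv hw]
  norm_num
  ring

theorem norm_half_zero_sumElim_dotProduct_U_mulVec {A B : Matrix n n ℂ} (hA : A.IsHermitian)
    (hB : B.IsHermitian) (s t : ℝ) {v w : n → ℂ} (hv : star v = v) (hw : star w = w) :
    ‖(1 / 2 : ℂ) * (Sum.elim 0 w ⬝ᵥ (U ((s : ℂ) • 1 - fromBlocks A B B A) t *ᵥ Sum.elim 0 v))‖
      = ‖v ⬝ᵥ (U (A + B) t *ᵥ w) + v ⬝ᵥ (U (A - B) t *ᵥ w)‖ / 4 := by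
  rw [U_smul_one_sub_fromBlocks hA hB, smul_mulVec, dotProduct_smul, blockCirculantAlgHom_apply,
    smul_mulVec, dotProduct_smul, zero_sumElim_dotProduct_fromBlocks_mulVec, smul_eq_mul,
    smul_eq_mul, norm_mul, norm_mul, norm_mul, norm_exp_neg_I_mul_mul,
    norm_dotProduct_conjTranspose_add_mulVec _ _ hv hw]
  norm_num
  ring

end Transition

theorem norm_add_eq_two_mul_iff {E : Type*} [NormedAddCommGroup E] [NormedSpace ℝ E]
    [StrictConvexSpace ℝ E] {x y : E} {r : ℝ} (hx : ‖x‖ ≤ r) (hy : ‖y‖ ≤ r) :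
    ‖x + y‖ = 2 * r ↔ x = y ∧ ‖x‖ = r := by
  constructor
  · intro h
    have htri := h ▸ norm_add_le x y
    have hxr : ‖x‖ = r := by linarith
    have hyr : ‖y‖ = r := by linarith
    exact ⟨eq_of_norm_eq_of_norm_add_eq (hxr.trans hyr.symm) (by linarith), hxr⟩
  · rintro ⟨rfl, rfl⟩
    rw [← two_smul ℝ x, norm_smul, Real.norm_two]

theorem sq_norm_add_div_four_eq_one_iff {p q : ℂ} (hp : ‖p‖ ≤ 2) (hq : ‖q‖ ≤ 2) :
    (‖p + q‖ / 4) ^ 2 = 1 ↔ ∃ χ : ℂ, ‖χ‖ = 1 ∧ p = 2 * χ ∧ q = 2 * χ := by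
  have hsq : (‖p + q‖ / 4) ^ 2 = 1 ↔ ‖p + q‖ = 2 * 2 := by
    rw [pow_eq_one_iff_of_nonneg (by positivity) two_ne_zero]
    constructor <;> intro h <;> linarith
  rw [hsq, norm_add_eq_two_mul_iff hp hq]
  constructor
  · rintro ⟨rfl, hp2⟩
    exact ⟨p / 2, by rw [norm_div, hp2]; norm_num, by ring, by ring⟩
  · rintro ⟨χ, hχ, rfl, rfl⟩
    exact ⟨rfl, by rw [norm_mul, hχ]; norm_num⟩

theorem stmt17_general {n r₁ r₂ : ℕ} (G H : SimpleGraph (Fin n))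
    [DecidableRel G.Adj] [DecidableRel H.Adj]
    (τ : ℝ) (a b c d : Fin n) (hab : a ≠ b) (hcd : c ≠ d) :
    -- i = 0 : between e₀ ⊗ (e_a - e_b) and e₀ ⊗ (e_c - e_d)
    (‖((1 / 2 : ℂ) *
        (Sum.elim ((e c - e d : Fin n → ℂ)) (0 : Fin n → ℂ) ⬝ᵥ
          ((U (((r₁ + r₂ : ℕ) : ℂ) • (1 : Matrix (Fin n ⊕ Fin n) (Fin n ⊕ Fin n) ℂ)
                - Matrix.fromBlocks (G.adjMatrix ℂ) (H.adjMatrix ℂ)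
                    (H.adjMatrix ℂ) (G.adjMatrix ℂ)) τ) *ᵥ
            Sum.elim ((e a - e b : Fin n → ℂ)) (0 : Fin n → ℂ))))‖ ^ 2 = 1
      ↔ ∃ χ : ℂ, ‖χ‖ = 1 ∧
          (e a - e b) ⬝ᵥ ((U (G.adjMatrix ℂ + H.adjMatrix ℂ) τ) *ᵥ (e c - e d)) = 2 * χ ∧
          (e a - e b) ⬝ᵥ ((U (G.adjMatrix ℂ - H.adjMatrix ℂ) τ) *ᵥ (e c - e d)) = 2 * χ)
    ∧
    -- i = 1 : between e₁ ⊗ (e_a - e_b) and e₁ ⊗ (e_c - e_d)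
    (‖((1 / 2 : ℂ) *
        (Sum.elim (0 : Fin n → ℂ) ((e c - e d : Fin n → ℂ)) ⬝ᵥ
          ((U (((r₁ + r₂ : ℕ) : ℂ) • (1 : Matrix (Fin n ⊕ Fin n) (Fin n ⊕ Fin n) ℂ)
                - Matrix.fromBlocks (G.adjMatrix ℂ) (H.adjMatrix ℂ)
                    (H.adjMatrix ℂ) (G.adjMatrix ℂ)) τ) *ᵥ
            Sum.elim (0 : Fin n → ℂ) ((e a - e b : Fin n → ℂ)))))‖ ^ 2 = 1
      ↔ ∃ χ : ℂ, ‖χ‖ = 1 ∧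
          (e a - e b) ⬝ᵥ ((U (G.adjMatrix ℂ + H.adjMatrix ℂ) τ) *ᵥ (e c - e d)) = 2 * χ ∧
          (e a - e b) ⬝ᵥ ((U (G.adjMatrix ℂ - H.adjMatrix ℂ) τ) *ᵥ (e c - e d)) = 2 * χ) := by
  have hA := G.isHermitian_adjMatrix (R := ℂ)
  have hB := H.isHermitian_adjMatrix (R := ℂ)
  have hv := star_e_sub_e a b
  have hw := star_e_sub_e c d
  rw [← Complex.ofReal_natCast, norm_half_sumElim_zero_dotProduct_U_mulVec hA hB _ _ hv hw,
    norm_half_zero_sumElim_dotProduct_U_mulVec hA hB _ _ hv hw,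
    sq_norm_add_div_four_eq_one_iff (norm_e_sub_e_dotProduct_U_mulVec_le (hA.add hB) τ hab hcd)
      (norm_e_sub_e_dotProduct_U_mulVec_le (hA.sub hB) τ hab hcd)]
  exact ⟨Iff.rfl, Iff.rfl⟩

theorem stmt17 {n r₁ r₂ : ℕ} (G H : SimpleGraph (Fin n))
    [DecidableRel G.Adj] [DecidableRel H.Adj]
    (hG : G.IsRegularOfDegree r₁) (hH : H.IsRegularOfDegree r₂)
    (τ : ℝ) (a b c d : Fin n) (hab : a ≠ b) (hcd : c ≠ d) :
    -- i = 0 : between e₀ ⊗ (e_a - e_b) and e₀ ⊗ (e_c - e_d)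
    (‖((1 / 2 : ℂ) *
        (Sum.elim ((e c - e d : Fin n → ℂ)) (0 : Fin n → ℂ) ⬝ᵥ
          ((U (((r₁ + r₂ : ℕ) : ℂ) • (1 : Matrix (Fin n ⊕ Fin n) (Fin n ⊕ Fin n) ℂ)
                - Matrix.fromBlocks (G.adjMatrix ℂ) (H.adjMatrix ℂ)
                    (H.adjMatrix ℂ) (G.adjMatrix ℂ)) τ) *ᵥ
            Sum.elim ((e a - e b : Fin n → ℂ)) (0 : Fin n → ℂ))))‖ ^ 2 = 1
      ↔ ∃ χ : ℂ, ‖χ‖ = 1 ∧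
          (e a - e b) ⬝ᵥ ((U (G.adjMatrix ℂ + H.adjMatrix ℂ) τ) *ᵥ (e c - e d)) = 2 * χ ∧
          (e a - e b) ⬝ᵥ ((U (G.adjMatrix ℂ - H.adjMatrix ℂ) τ) *ᵥ (e c - e d)) = 2 * χ)
    ∧
    -- i = 1 : between e₁ ⊗ (e_a - e_b) and e₁ ⊗ (e_c - e_d)
    (‖((1 / 2 : ℂ) *
        (Sum.elim (0 : Fin n → ℂ) ((e c - e d : Fin n → ℂ)) ⬝ᵥ
          ((U (((r₁ + r₂ : ℕ) : ℂ) • (1 : Matrix (Fin n ⊕ Fin n) (Fin n ⊕ Fin n) ℂ)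
                - Matrix.fromBlocks (G.adjMatrix ℂ) (H.adjMatrix ℂ)
                    (H.adjMatrix ℂ) (G.adjMatrix ℂ)) τ) *ᵥ
            Sum.elim (0 : Fin n → ℂ) ((e a - e b : Fin n → ℂ)))))‖ ^ 2 = 1
      ↔ ∃ χ : ℂ, ‖χ‖ = 1 ∧
          (e a - e b) ⬝ᵥ ((U (G.adjMatrix ℂ + H.adjMatrix ℂ) τ) *ᵥ (e c - e d)) = 2 * χ ∧
          (e a - e b) ⬝ᵥ ((U (G.adjMatrix ℂ - H.adjMatrix ℂ) τ) *ᵥ (e c - e d)) = 2 * χ) :=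
  stmt17_general G H τ a b c d hab hcd
end
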